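/- For all integers a, b with 0 ≤ b ≤ a, one has C(a,b) = Σ_{k=0}^{b} C(a−b+k, k) · C(a−b+1, a−2b+2k+1), where a binomial coefficient C(m, j) is understood to be 0 whenever j < 0 or j > m. -/

import Mathlib

/-!
Generating functions: `(1 - X)⁻ᵈ = (1 + X)ᵈ · (1 - X²)⁻ᵈ`, since `(1 + X)(1 - X) = 1 - X²`.
With `d = n + 1` and `n = a - b`, comparing the coefficients of `Xᵇ` gives
`C(n + b, b) = Σ_{2k ≤ b} C(n + k, k) · C(n + 1, b - 2k)`. By the symmetry of binomial
coefficients, the factor `C(a - b + 1, a - 2b + 2k + 1)` of the statement equals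
`C(n + 1, b - 2k)` when `2k ≤ b` and vanishes when `2k > b`.
-/

open Finset PowerSeries

theorem PowerSeries.coeff_one_add_X_pow {R : Type*} [Semiring R] (d k : ℕ) :
    coeff k ((1 + X : R⟦X⟧) ^ d) = d.choose k := by
  have h : (1 + X : R⟦X⟧) ^ d = (((1 : Polynomial R) + Polynomial.X) ^ d : Polynomial R) := by
    simp
  rw [h, Polynomial.coeff_coe, Polynomial.coeff_one_add_X_pow]

theorem PowerSeries.invOneSubPow_val_eq_subst_X_sq_mul {S : Type*} [CommRing S] (d : ℕ) :
    (invOneSubPow S d).val = subst (X ^ 2 : S⟦X⟧) (invOneSubPow S d).val * (1 + X) ^ d := by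
  have hX2 : HasSubst (X ^ 2 : S⟦X⟧) := .X_pow two_ne_zero
  have hone : subst (X ^ 2 : S⟦X⟧) (1 : S⟦X⟧) = 1 := by
    rw [← coe_substAlgHom hX2, map_one]
  have hsub : (1 - X ^ 2 : S⟦X⟧) ^ d = subst (X ^ 2 : S⟦X⟧) ((1 - X : S⟦X⟧) ^ d) := by
    rw [subst_pow hX2, subst_sub hX2, subst_X hX2, hone]
  symm
  rw [← Units.mul_inv_eq_one, ← Units.inv_eq_val_inv, invOneSubPow_inv_eq_one_sub_pow,
    mul_assoc, ← mul_pow, show (1 + X) * (1 - X) = (1 - X ^ 2 : S⟦X⟧) by ring, hsub,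
    ← subst_mul hX2, ← invOneSubPow_inv_eq_one_sub_pow, Units.inv_eq_val_inv, Units.mul_inv, hone]

theorem Finset.sum_range_succ_ite_two_dvd {M : Type*} [AddCommMonoid M] (b : ℕ) (f : ℕ → M) :
    ∑ i ∈ range (b + 1), (if 2 ∣ i then f i else 0) = ∑ k ∈ range (b / 2 + 1), f (2 * k) := by
  rw [← sum_filter]
  refine sum_nbij' (· / 2) (2 * ·) ?_ ?_ ?_ ?_ ?_ <;> intro i hi <;> simp at hi ⊢
  all_goals first | omega | (congr 1; omega)

theorem Nat.choose_add_eq_sum_choose_mul_choose (n b : ℕ) :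
    (n + b).choose b = ∑ k ∈ range (b / 2 + 1), (n + k).choose k * (n + 1).choose (b - 2 * k) := by
  have h := congrArg (coeff b) (invOneSubPow_val_eq_subst_X_sq_mul (S := ℤ) (n + 1))
  rw [invOneSubPow_val_succ_eq_mk_add_choose, coeff_mk, coeff_mul,
    Nat.sum_antidiagonal_eq_sum_range_succ (fun i j => coeff i _ * coeff j _)] at h
  simp only [coeff_subst_X_pow two_ne_zero, coeff_mk, coeff_one_add_X_pow, ite_mul, zero_mul,
    sum_range_succ_ite_two_dvd, Nat.mul_div_cancel_left _ two_pos, Algebra.algebraMap_self,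
    RingHom.id_apply] at h
  simp only [← Nat.choose_symm_add]
  exact_mod_cast h

theorem Nat.ite_neg_choose_toNat_eq_zero {m : ℕ} {j : ℤ} (h : (m : ℤ) < j) :
    (if j < 0 then 0 else m.choose j.toNat) = 0 := by
  rw [if_neg (by omega), Nat.choose_eq_zero_of_lt (by omega)]

theorem Nat.ite_neg_choose_toNat_sub (m i : ℕ) :
    (if (m : ℤ) - i < 0 then 0 else m.choose ((m : ℤ) - i).toNat) = m.choose i := by
  split_ifs with h
  · exact (Nat.choose_eq_zero_of_lt (by omega)).symm
  · rw [show ((m : ℤ) - i).toNat = m - i by omega, Nat.choose_symm (by omega)]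

theorem binomial_sum_identity (a b : ℕ) (hba : b ≤ a) :
    a.choose b =
      ∑ k ∈ Finset.range (b + 1),
        (a - b + k).choose k *
          (if ((a : ℤ) - 2 * b + 2 * k + 1) < 0 then 0
           else (a - b + 1).choose ((a : ℤ) - 2 * b + 2 * k + 1).toNat) := by
  obtain ⟨n, rfl⟩ := Nat.exists_eq_add_of_le' hba
  rw [Nat.add_sub_cancel, Nat.choose_add_eq_sum_choose_mul_choose,
    ← sum_subset (range_subset_range.2 (by omega : b / 2 + 1 ≤ b + 1))]
  · refine sum_congr rfl fun k hk => ?_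
    rw [mem_range] at hk
    have hidx : ((n + b : ℕ) : ℤ) - 2 * b + 2 * k + 1 = ((n + 1 : ℕ) : ℤ) - (b - 2 * k : ℕ) := by
      omega
    rw [hidx, Nat.ite_neg_choose_toNat_sub]
  · intro k _ hk
    rw [mem_range] at hk
    rw [Nat.ite_neg_choose_toNat_eq_zero (by omega), mul_zero]
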